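/- arXiv:1911.12182 — 3 statements merged into one kernel-verified Lean document; each statement's English description precedes it below -/
import Mathlib

section
/- Let B be a finite set. The map (A, I) ↦ (A, I_A), where I_A denotes the partition of A induced by I, is a bijection from the set of pairs (A, I) with I a partition of B and A a subset of B adapted to I, onto the set of pairs (A, J) with A a subset of B and J a partition of A. Its inverse is (A, J) ↦ (A, J ⊔ {{i} : i ∈ B \ A}). -/
/-- `𝓘` is a partition of the finite set `B`. -/
def IsPartitionOf {α : Type*} (B : Finset α) (𝓘 : Finset (Finset α)) : Prop :=
  (∀ I ∈ 𝓘, I.Nonempty) ∧ (∀ I ∈ 𝓘, I ⊆ B) ∧ ∀ a ∈ B, ∃! I, I ∈ 𝓘 ∧ a ∈ I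

/-- The partition of `A` induced by `𝓘`: the nonempty traces `I ∩ A` of blocks of `𝓘`. -/
def inducedPart {α : Type*} [DecidableEq α] (A : Finset α) (𝓘 : Finset (Finset α)) :
    Finset (Finset α) :=
  (𝓘.image (fun I => I ∩ A)).filter (fun J => J.Nonempty)

/-- `A` is adapted to the partition `𝓘` of `B`: every block of cardinality `≥ 2` is
contained in `A`. -/
def Adapted {α : Type*} (𝓘 : Finset (Finset α)) (A : Finset α) : Prop :=
  ∀ I ∈ 𝓘, 2 ≤ I.card → I ⊆ A

/-! Adaptedness forces every block of `𝓘` that meets `B \ A` to be a singleton, so the blocks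
of `𝓘` are those contained in `A`, which are exactly the blocks of `𝓘_A`, together with the
singletons of `B \ A`. Conversely, adding the singletons of `B \ A` to a partition of `A` gives
a partition of `B` to which `A` is adapted, and whose trace on `A` is the original partition. -/

section
open Finset
variable {α : Type*} {A B C : Finset α} {𝓘 𝓙 : Finset (Finset α)}

theorem Adapted.eq_singleton (hA : Adapted 𝓘 A) {I : Finset α} (hI : I ∈ 𝓘) {x : α}
    (hxI : x ∈ I) (hxA : x ∉ A) : I = {x} := by
  have hcard : I.card ≤ 1 := by
    by_contra! h
    exact hxA (hA I hI h hxI)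
  exact eq_singleton_iff_unique_mem.mpr ⟨hxI, fun y hy => card_le_one.mp hcard y hy x hxI⟩

variable [DecidableEq α]

theorem isPartitionOf_inducedPart (h𝓘 : IsPartitionOf B 𝓘) (hAB : A ⊆ B) :
    IsPartitionOf A (inducedPart A 𝓘) := by
  refine ⟨fun J hJ => (mem_filter.mp hJ).2, fun J hJ => ?_, fun a ha => ?_⟩
  · obtain ⟨I, -, rfl⟩ := mem_image.mp (mem_filter.mp hJ).1
    exact inter_subset_right
  · obtain ⟨I, ⟨hI, haI⟩, huniq⟩ := h𝓘.2.2 a (hAB ha)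
    refine ⟨I ∩ A, ⟨mem_filter.mpr ⟨mem_image_of_mem _ hI, a, mem_inter.mpr ⟨haI, ha⟩⟩,
      mem_inter.mpr ⟨haI, ha⟩⟩, ?_⟩
    rintro J ⟨hJ, haJ⟩
    obtain ⟨I', hI', rfl⟩ := mem_image.mp (mem_filter.mp hJ).1
    rw [huniq I' ⟨hI', (mem_inter.mp haJ).1⟩]

theorem isPartitionOf_image_singleton (C : Finset α) :
    IsPartitionOf C (C.image singleton) := by
  refine ⟨?_, ?_, fun a ha => ⟨{a}, ⟨mem_image_of_mem _ ha, mem_singleton_self a⟩, ?_⟩⟩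
  · simp
  · simp
  · rintro J ⟨hJ, haJ⟩
    obtain ⟨x, -, rfl⟩ := mem_image.mp hJ
    rw [mem_singleton.mp haJ]

theorem IsPartitionOf.union (h𝓘 : IsPartitionOf A 𝓘) (h𝓙 : IsPartitionOf C 𝓙)
    (hAC : Disjoint A C) : IsPartitionOf (A ∪ C) (𝓘 ∪ 𝓙) := by
  refine ⟨?_, ?_, fun a ha => ?_⟩
  · simp only [mem_union]
    rintro I (hI | hI)
    exacts [h𝓘.1 I hI, h𝓙.1 I hI]
  · simp only [mem_union]
    rintro I (hI | hI)
    exacts [(h𝓘.2.1 I hI).trans subset_union_left, (h𝓙.2.1 I hI).trans subset_union_right]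
  · simp only [mem_union]
    rcases mem_union.mp ha with haA | haC
    · obtain ⟨I, ⟨hI, haI⟩, huniq⟩ := h𝓘.2.2 a haA
      refine ⟨I, ⟨Or.inl hI, haI⟩, ?_⟩
      rintro J ⟨hJ | hJ, haJ⟩
      · exact huniq J ⟨hJ, haJ⟩
      · exact absurd (h𝓙.2.1 J hJ haJ) (disjoint_left.mp hAC haA)
    · obtain ⟨I, ⟨hI, haI⟩, huniq⟩ := h𝓙.2.2 a haC
      refine ⟨I, ⟨Or.inr hI, haI⟩, ?_⟩
      rintro J ⟨hJ | hJ, haJ⟩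
      · exact absurd (h𝓘.2.1 J hJ haJ) (disjoint_right.mp hAC haC)
      · exact huniq J ⟨hJ, haJ⟩

theorem IsPartitionOf.union_image_singleton_sdiff (h𝓙 : IsPartitionOf A 𝓙) (hAB : A ⊆ B) :
    IsPartitionOf B (𝓙 ∪ (B \ A).image singleton) := by
  simpa [union_sdiff_of_subset hAB] using
    h𝓙.union (isPartitionOf_image_singleton (B \ A)) disjoint_sdiff

theorem adapted_union_image_singleton (h𝓙 : ∀ J ∈ 𝓙, J ⊆ A) :
    Adapted (𝓙 ∪ C.image singleton) A := by
  intro I hI hcard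
  rcases mem_union.mp hI with hI | hI
  · exact h𝓙 I hI
  · obtain ⟨x, -, rfl⟩ := mem_image.mp hI
    simp at hcard

theorem Adapted.subset_of_inter_nonempty (hA : Adapted 𝓘 A) {I : Finset α} (hI : I ∈ 𝓘)
    (hIA : (I ∩ A).Nonempty) : I ⊆ A := by
  obtain ⟨x, hx⟩ := hIA
  obtain ⟨hxI, hxA⟩ := mem_inter.mp hx
  intro y hyI
  by_contra hyA
  rw [hA.eq_singleton hI hyI hyA, mem_singleton] at hxI
  exact hyA (hxI ▸ hxA)

theorem inducedPart_eq_filter_subset (h𝓘 : ∀ I ∈ 𝓘, I.Nonempty) (hA : Adapted 𝓘 A) :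
    inducedPart A 𝓘 = 𝓘.filter (· ⊆ A) := by
  ext J
  simp only [inducedPart, mem_filter, mem_image]
  constructor
  · rintro ⟨⟨I, hI, rfl⟩, hIA⟩
    have hsub := hA.subset_of_inter_nonempty hI hIA
    rw [inter_eq_left.mpr hsub]
    exact ⟨hI, hsub⟩
  · rintro ⟨hJ, hJA⟩
    exact ⟨⟨J, hJ, inter_eq_left.mpr hJA⟩, h𝓘 J hJ⟩

theorem IsPartitionOf.filter_not_subset (h𝓘 : IsPartitionOf B 𝓘) (hA : Adapted 𝓘 A) :
    𝓘.filter (¬ · ⊆ A) = (B \ A).image singleton := by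
  ext I
  simp only [mem_filter, mem_image, mem_sdiff]
  constructor
  · rintro ⟨hI, hIA⟩
    obtain ⟨x, hxI, hxA⟩ := not_subset.mp hIA
    exact ⟨x, ⟨h𝓘.2.1 I hI hxI, hxA⟩, (hA.eq_singleton hI hxI hxA).symm⟩
  · rintro ⟨x, ⟨hxB, hxA⟩, rfl⟩
    obtain ⟨I, ⟨hI, hxI⟩, -⟩ := h𝓘.2.2 x hxB
    rw [← hA.eq_singleton hI hxI hxA]
    exact ⟨hI, fun h => hxA (h hxI)⟩

theorem IsPartitionOf.inducedPart_union_image_singleton_sdiff (h𝓘 : IsPartitionOf B 𝓘)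
    (hA : Adapted 𝓘 A) : inducedPart A 𝓘 ∪ (B \ A).image singleton = 𝓘 := by
  rw [inducedPart_eq_filter_subset h𝓘.1 hA, ← h𝓘.filter_not_subset hA,
    filter_union_filter_not_eq]

theorem IsPartitionOf.inducedPart_union_image_singleton (h𝓙 : IsPartitionOf A 𝓙)
    (hAB : A ⊆ B) : inducedPart A (𝓙 ∪ (B \ A).image singleton) = 𝓙 := by
  rw [inducedPart_eq_filter_subset (h𝓙.union_image_singleton_sdiff hAB).1
    (adapted_union_image_singleton h𝓙.2.1), filter_union, filter_true_of_mem h𝓙.2.1,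
    filter_false_of_mem, union_empty]
  simp only [mem_image, mem_sdiff]
  rintro _ ⟨x, ⟨-, hxA⟩, rfl⟩
  simpa using hxA

end

/-- The map `(A, 𝓘) ↦ (A, 𝓘_A)` is a bijection from the set of pairs `(A, 𝓘)` with `𝓘` a
partition of `B` and `A ⊆ B` adapted to `𝓘`, onto the set of pairs `(A, 𝓙)` with `A ⊆ B`
and `𝓙` a partition of `A`; its inverse is `(A, 𝓙) ↦ (A, 𝓙 ⊔ {{i} : i ∈ B \ A})`. -/
theorem stmt_3 {α : Type*} [DecidableEq α] (B : Finset α) :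
    Set.BijOn
      (fun q : Finset α × Finset (Finset α) => (q.1, inducedPart q.1 q.2))
      {q | IsPartitionOf B q.2 ∧ q.1 ⊆ B ∧ Adapted q.2 q.1}
      {q | q.1 ⊆ B ∧ IsPartitionOf q.1 q.2} ∧
    Set.InvOn
      (fun q : Finset α × Finset (Finset α) =>
        (q.1, q.2 ∪ (B \ q.1).image (fun i => ({i} : Finset α))))
      (fun q : Finset α × Finset (Finset α) => (q.1, inducedPart q.1 q.2))
      {q | IsPartitionOf B q.2 ∧ q.1 ⊆ B ∧ Adapted q.2 q.1}
      {q | q.1 ⊆ B ∧ IsPartitionOf q.1 q.2} := by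
  have hInv : Set.InvOn
      (fun q : Finset α × Finset (Finset α) =>
        (q.1, q.2 ∪ (B \ q.1).image (fun i => ({i} : Finset α))))
      (fun q : Finset α × Finset (Finset α) => (q.1, inducedPart q.1 q.2))
      {q | IsPartitionOf B q.2 ∧ q.1 ⊆ B ∧ Adapted q.2 q.1}
      {q | q.1 ⊆ B ∧ IsPartitionOf q.1 q.2} :=
    ⟨fun _ ⟨h𝓘, _, hA⟩ => Prod.ext rfl (h𝓘.inducedPart_union_image_singleton_sdiff hA),
      fun _ ⟨hAB, h𝓙⟩ => Prod.ext rfl (h𝓙.inducedPart_union_image_singleton hAB)⟩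
  refine ⟨hInv.bijOn ?_ ?_, hInv⟩
  · exact fun _ ⟨h𝓘, hAB, _⟩ => ⟨hAB, isPartitionOf_inducedPart h𝓘 hAB⟩
  · exact fun _ ⟨hAB, h𝓙⟩ => ⟨h𝓙.union_image_singleton_sdiff hAB, hAB,
      adapted_union_image_singleton h𝓙.2.1⟩
end

section
/- Let p ≥ 2, let I be a partition of {1,…,p}, and let J be a partition of the set I (viewing I as a finite set of blocks). Assume that for every i ∈ {1,…,p}, if {i} is a block of I then {{i}} is not a block of J. Then the number of blocks of J satisfies |J| ≤ p/2. Moreover, |J| = p/2 holds if and only if (I, J) is a double partition into pairs of {1,…,p}. -/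
/-- `𝓘` is a partition of the finite set `B` into pairs. -/
def IsPairPartitionOf {α : Type*} (B : Finset α) (𝓘 : Finset (Finset α)) : Prop :=
  IsPartitionOf B 𝓘 ∧ ∀ I ∈ 𝓘, I.card = 2

/-- `(𝓘, 𝓙)` is a double partition into pairs of `A` with distinguished subset `S`:
`𝓘` is a partition of `A`, `𝓙` a partition of (the set of blocks of) `𝓘`, the blocks of
`𝓘` contained in `S` are exactly the singletons `{s}`, `s ∈ S`, the remaining blocks of
`𝓘` form a partition of `A \ S` into pairs, the blocks of `𝓙` contained in
`𝓘_S = {{s} : s ∈ S}` form a partition of `𝓘_S` into pairs, and the remaining blocks of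
`𝓙` are exactly the singletons `{I}` for `I ∈ 𝓘 \ 𝓘_S`. -/
def IsDPPWith {α : Type*} [DecidableEq α] (A : Finset α) (𝓘 : Finset (Finset α))
    (𝓙 : Finset (Finset (Finset α))) (S : Finset α) : Prop :=
  IsPartitionOf A 𝓘 ∧ IsPartitionOf 𝓘 𝓙 ∧ S ⊆ A ∧
  𝓘.filter (fun I => I ⊆ S) = S.image (fun s => ({s} : Finset α)) ∧
  IsPairPartitionOf (A \ S) (𝓘 \ S.image (fun s => ({s} : Finset α))) ∧
  IsPairPartitionOf (S.image (fun s => ({s} : Finset α)))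
    (𝓙.filter (fun J => J ⊆ S.image (fun s => ({s} : Finset α)))) ∧
  𝓙 \ 𝓙.filter (fun J => J ⊆ S.image (fun s => ({s} : Finset α))) =
    (𝓘 \ S.image (fun s => ({s} : Finset α))).image
      (fun I => ({I} : Finset (Finset α)))

/-- `(𝓘, 𝓙)` is a double partition into pairs of `A`. -/
def IsDPP {α : Type*} [DecidableEq α] (A : Finset α) (𝓘 : Finset (Finset α))
    (𝓙 : Finset (Finset (Finset α))) : Prop :=
  ∃ S, IsDPPWith A 𝓘 𝓙 S

open Finset

section Weight

variable {α : Type*} {J : Finset (Finset α)}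

lemma card_le_sum_card (hJ : ∀ I ∈ J, I.Nonempty) : J.card ≤ ∑ I ∈ J, I.card := by
  simpa using card_nsmul_le_sum J card 1 fun I hI => one_le_card.2 (hJ I hI)

lemma two_le_sum_card (hJ : ∀ I ∈ J, I.Nonempty) (hJne : J.Nonempty) (hJa : ∀ a, J ≠ {{a}}) :
    2 ≤ ∑ I ∈ J, I.card := by
  by_contra! hlt
  obtain ⟨I, rfl⟩ : ∃ I, J = {I} := card_eq_one.1 <| by
    have := card_le_sum_card hJ
    have := hJne.card_pos
    omega
  obtain ⟨a, rfl⟩ : ∃ a, I = {a} := card_eq_one.1 <| by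
    have := (hJ I (mem_singleton_self I)).card_pos
    rw [sum_singleton] at hlt
    omega
  exact hJa a rfl

lemma eq_singleton_or_card_eq_two_of_sum_card_eq_two (hJ : ∀ I ∈ J, I.Nonempty)
    (hw : ∑ I ∈ J, I.card = 2) :
    (∃ I, J = {I} ∧ I.card = 2) ∨ (J.card = 2 ∧ ∀ I ∈ J, I.card = 1) := by
  have hle := card_le_sum_card hJ
  have hJne : J.card ≠ 0 := fun h0 => by simp [card_eq_zero.1 h0] at hw
  rcases (by omega : J.card = 1 ∨ J.card = 2) with h1 | h2
  · obtain ⟨I, rfl⟩ := card_eq_one.1 h1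
    exact Or.inl ⟨I, rfl, by simpa using hw⟩
  · refine Or.inr ⟨h2, fun I hI => ?_⟩
    have hsum : ∑ _I ∈ J, 1 = ∑ I ∈ J, I.card := by simp [h2, hw]
    exact ((sum_eq_sum_iff_of_le fun I hI => one_le_card.2 (hJ I hI)).1 hsum I hI).symm

end Weight

namespace IsPartitionOf

variable {α : Type*} {B : Finset α} {𝓘 : Finset (Finset α)}

lemma eq_of_mem (h : IsPartitionOf B 𝓘) {I I' : Finset α} (hI : I ∈ 𝓘) (hI' : I' ∈ 𝓘)
    {a : α} (ha : a ∈ I) (ha' : a ∈ I') : I = I' := by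
  obtain ⟨_, -, hu⟩ := h.2.2 a (h.2.1 I hI ha)
  exact (hu I ⟨hI, ha⟩).trans (hu I' ⟨hI', ha'⟩).symm

lemma nonempty_of_mem_mem {𝓙 : Finset (Finset (Finset α))} (h𝓘 : IsPartitionOf B 𝓘)
    (h𝓙 : IsPartitionOf 𝓘 𝓙) {J : Finset (Finset α)} (hJ : J ∈ 𝓙) : ∀ I ∈ J, I.Nonempty :=
  fun I hI => h𝓘.1 I (h𝓙.2.1 J hJ hI)

lemma two_le_sum_card_of_mem {𝓙 : Finset (Finset (Finset α))} (h𝓘 : IsPartitionOf B 𝓘)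
    (h𝓙 : IsPartitionOf 𝓘 𝓙)
    (hsing : ∀ a, ({a} : Finset α) ∈ 𝓘 → ({{a}} : Finset (Finset α)) ∉ 𝓙)
    {J : Finset (Finset α)} (hJ : J ∈ 𝓙) : 2 ≤ ∑ I ∈ J, I.card :=
  two_le_sum_card (h𝓘.nonempty_of_mem_mem h𝓙 hJ) (h𝓙.1 J hJ) fun a ha =>
    hsing a (h𝓙.2.1 J hJ (ha ▸ mem_singleton_self _)) (ha ▸ hJ)

lemma pairwiseDisjoint (h : IsPartitionOf B 𝓘) : (𝓘 : Set (Finset α)).PairwiseDisjoint id :=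
  fun _ hI _ hI' hne => disjoint_left.2 fun _ ha ha' => hne (h.eq_of_mem hI hI' ha ha')

lemma biUnion_eq [DecidableEq α] (h : IsPartitionOf B 𝓘) : 𝓘.biUnion id = B := by
  ext a
  simp only [mem_biUnion, id]
  refine ⟨fun ⟨I, hI, ha⟩ => h.2.1 I hI ha, fun ha => ?_⟩
  obtain ⟨I, ⟨hI, haI⟩, -⟩ := h.2.2 a ha
  exact ⟨I, hI, haI⟩

lemma sum_sum_eq [DecidableEq α] {M : Type*} [AddCommMonoid M] (h : IsPartitionOf B 𝓘)
    (f : α → M) : ∑ I ∈ 𝓘, ∑ a ∈ I, f a = ∑ a ∈ B, f a := by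
  rw [← h.biUnion_eq, sum_biUnion h.pairwiseDisjoint]
  rfl

lemma sum_card [DecidableEq α] (h : IsPartitionOf B 𝓘) : ∑ I ∈ 𝓘, I.card = B.card := by
  rw [← h.biUnion_eq, card_biUnion h.pairwiseDisjoint]
  rfl

lemma sdiff [DecidableEq α] {T : Finset α} {𝓚 : Finset (Finset α)} (h : IsPartitionOf B 𝓘)
    (h𝓚 : IsPartitionOf T 𝓚) (h𝓚𝓘 : 𝓚 ⊆ 𝓘) : IsPartitionOf (B \ T) (𝓘 \ 𝓚) := by
  refine ⟨fun I hI => h.1 I (mem_sdiff.1 hI).1, fun I hI a ha => ?_, fun a ha => ?_⟩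
  · obtain ⟨hI, hI𝓚⟩ := mem_sdiff.1 hI
    refine mem_sdiff.2 ⟨h.2.1 I hI ha, fun haT => ?_⟩
    obtain ⟨K, ⟨hK, haK⟩, -⟩ := h𝓚.2.2 a haT
    exact hI𝓚 (h.eq_of_mem hI (h𝓚𝓘 hK) ha haK ▸ hK)
  · obtain ⟨haB, haT⟩ := mem_sdiff.1 ha
    obtain ⟨I, ⟨hI, haI⟩, hu⟩ := h.2.2 a haB
    exact ⟨I, ⟨mem_sdiff.2 ⟨hI, fun hI𝓚 => haT (h𝓚.2.1 I hI𝓚 haI)⟩, haI⟩,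
      fun I' hI' => hu I' ⟨(mem_sdiff.1 hI'.1).1, hI'.2⟩⟩

lemma filter_subset_of_saturated [DecidableEq α] {T : Finset α} (h : IsPartitionOf B 𝓘)
    (hTB : T ⊆ B)
    (hT : ∀ I ∈ 𝓘, ∀ a ∈ I, a ∈ T → I ⊆ T) : IsPartitionOf T (𝓘.filter (· ⊆ T)) := by
  refine ⟨fun I hI => h.1 I (mem_filter.1 hI).1, fun I hI => (mem_filter.1 hI).2,
    fun a ha => ?_⟩
  obtain ⟨I, ⟨hI, haI⟩, hu⟩ := h.2.2 a (hTB ha)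
  exact ⟨I, ⟨mem_filter.2 ⟨hI, hT I hI a haI ha⟩, haI⟩,
    fun I' hI' => hu I' ⟨(mem_filter.1 hI'.1).1, hI'.2⟩⟩

lemma filter_subset_eq_image_singleton [DecidableEq α] {S : Finset α} (h : IsPartitionOf B 𝓘)
    (hS : ∀ s ∈ S, {s} ∈ 𝓘) : 𝓘.filter (· ⊆ S) = S.image fun s => {s} := by
  ext I
  rw [mem_filter]
  refine ⟨fun ⟨hI, hIS⟩ => ?_, fun hI => ?_⟩
  · obtain ⟨a, ha⟩ := h.1 I hI
    rw [h.eq_of_mem hI (hS a (hIS ha)) ha (mem_singleton_self a)]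
    exact mem_image_of_mem _ (hIS ha)
  · obtain ⟨s, hs, rfl⟩ := mem_image.1 hI
    exact ⟨hS s hs, singleton_subset_iff.2 hs⟩

end IsPartitionOf

lemma isPartitionOf_image_singleton_s6 {α : Type*} [DecidableEq α] (S : Finset α) :
    IsPartitionOf S (S.image fun s => {s}) := by
  refine ⟨by simp, by simp, fun a ha => ⟨{a}, ⟨mem_image_of_mem _ ha, mem_singleton_self a⟩, ?_⟩⟩
  rintro I ⟨hI, haI⟩
  obtain ⟨s, -, rfl⟩ := mem_image.1 hI
  rw [mem_singleton.1 haI]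

lemma IsPairPartitionOf.two_mul_card {α : Type*} [DecidableEq α] {B : Finset α}
    {𝓘 : Finset (Finset α)} (h : IsPairPartitionOf B 𝓘) : 2 * 𝓘.card = B.card := by
  rw [← h.1.sum_card, sum_congr rfl h.2, sum_const, smul_eq_mul, mul_comm]

section DoublePartition

variable {α : Type*} [DecidableEq α] {A : Finset α} {𝓘 : Finset (Finset α)}
  {𝓙 : Finset (Finset (Finset α))}

lemma IsPartitionOf.sum_sum_card (h𝓘 : IsPartitionOf A 𝓘) (h𝓙 : IsPartitionOf 𝓘 𝓙) :
    ∑ J ∈ 𝓙, ∑ I ∈ J, I.card = A.card := by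
  rw [h𝓙.sum_sum_eq, h𝓘.sum_card]

theorem two_mul_card_le (h𝓘 : IsPartitionOf A 𝓘) (h𝓙 : IsPartitionOf 𝓘 𝓙)
    (hsing : ∀ a, ({a} : Finset α) ∈ 𝓘 → ({{a}} : Finset (Finset α)) ∉ 𝓙) :
    2 * 𝓙.card ≤ A.card :=
  calc 2 * 𝓙.card = ∑ _J ∈ 𝓙, 2 := by rw [sum_const, smul_eq_mul, mul_comm]
    _ ≤ ∑ J ∈ 𝓙, ∑ I ∈ J, I.card := sum_le_sum fun _ => h𝓘.two_le_sum_card_of_mem h𝓙 hsing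
    _ = A.card := h𝓘.sum_sum_card h𝓙

lemma sum_card_eq_two_of_two_mul_card_eq (h𝓘 : IsPartitionOf A 𝓘) (h𝓙 : IsPartitionOf 𝓘 𝓙)
    (hsing : ∀ a, ({a} : Finset α) ∈ 𝓘 → ({{a}} : Finset (Finset α)) ∉ 𝓙)
    (heq : 2 * 𝓙.card = A.card) : ∀ J ∈ 𝓙, ∑ I ∈ J, I.card = 2 := by
  have hsum : ∑ _J ∈ 𝓙, 2 = ∑ J ∈ 𝓙, ∑ I ∈ J, I.card := by
    rw [h𝓘.sum_sum_card h𝓙, sum_const, smul_eq_mul, mul_comm, heq]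
  exact fun J hJ => ((sum_eq_sum_iff_of_le fun _ => h𝓘.two_le_sum_card_of_mem h𝓙 hsing).1
    hsum J hJ).symm

lemma eq_singleton_or_subset_of_sum_card_eq_two (h𝓘 : IsPartitionOf A 𝓘)
    (h𝓙 : IsPartitionOf 𝓘 𝓙) {S : Finset α}
    (hS : ∀ I, I ∈ S.image (fun s => {s}) ↔ I ∈ 𝓘 ∧ I.card = 1)
    (hw : ∀ J ∈ 𝓙, ∑ I ∈ J, I.card = 2) {J : Finset (Finset α)} (hJ : J ∈ 𝓙) :
    (∃ I ∉ S.image (fun s => {s}), J = {I} ∧ I.card = 2) ∨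
      (J ⊆ S.image (fun s => {s}) ∧ J.card = 2) := by
  rcases eq_singleton_or_card_eq_two_of_sum_card_eq_two (h𝓘.nonempty_of_mem_mem h𝓙 hJ)
    (hw J hJ) with ⟨I, rfl, hI⟩ | ⟨hJ2, hJ1⟩
  · exact Or.inl ⟨I, fun hI₁ => by simp [((hS I).1 hI₁).2] at hI, rfl, hI⟩
  · exact Or.inr ⟨fun I hI => (hS I).2 ⟨h𝓙.2.1 J hJ hI, hJ1 I hI⟩, hJ2⟩

lemma card_eq_two_and_singleton_mem_of_sum_card_eq_two (h𝓘 : IsPartitionOf A 𝓘)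
    (h𝓙 : IsPartitionOf 𝓘 𝓙) {S : Finset α}
    (hS : ∀ I, I ∈ S.image (fun s => {s}) ↔ I ∈ 𝓘 ∧ I.card = 1)
    (hw : ∀ J ∈ 𝓙, ∑ I ∈ J, I.card = 2) {I : Finset α} (hI : I ∈ 𝓘 \ S.image fun s => {s}) :
    I.card = 2 ∧ {I} ∈ 𝓙 := by
  obtain ⟨J, ⟨hJ, hIJ⟩, -⟩ := h𝓙.2.2 I (mem_sdiff.1 hI).1
  rcases eq_singleton_or_subset_of_sum_card_eq_two h𝓘 h𝓙 hS hw hJ with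
    ⟨I', -, rfl, hI'⟩ | ⟨hJ₁, -⟩
  · rw [mem_singleton.1 hIJ]
    exact ⟨hI', hJ⟩
  · exact absurd (hJ₁ hIJ) (mem_sdiff.1 hI).2

lemma isDPPWith_of_sum_card_eq_two (h𝓘 : IsPartitionOf A 𝓘) (h𝓙 : IsPartitionOf 𝓘 𝓙)
    {S : Finset α} (hS : ∀ I, I ∈ S.image (fun s => {s}) ↔ I ∈ 𝓘 ∧ I.card = 1)
    (hw : ∀ J ∈ 𝓙, ∑ I ∈ J, I.card = 2) : IsDPPWith A 𝓘 𝓙 S := by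
  have hcases := fun J (hJ : J ∈ 𝓙) => eq_singleton_or_subset_of_sum_card_eq_two h𝓘 h𝓙 hS hw hJ
  set 𝓘₁ := S.image fun s => ({s} : Finset α)
  have h𝓘₁ : 𝓘₁ ⊆ 𝓘 := fun I hI => ((hS I).1 hI).1
  have hsingle : ∀ s ∈ S, ({s} : Finset α) ∈ 𝓘 := fun s hs => h𝓘₁ (mem_image_of_mem _ hs)
  have hblock := fun I (hI : I ∈ 𝓘 \ 𝓘₁) =>
    card_eq_two_and_singleton_mem_of_sum_card_eq_two h𝓘 h𝓙 hS hw hI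
  refine ⟨h𝓘, h𝓙, fun s hs => h𝓘.2.1 _ (hsingle s hs) (mem_singleton_self s),
    h𝓘.filter_subset_eq_image_singleton hsingle,
    ⟨h𝓘.sdiff (isPartitionOf_image_singleton_s6 S) h𝓘₁, fun I hI => (hblock I hI).1⟩,
    ⟨?_, ?_⟩, ?_⟩
  · refine h𝓙.filter_subset_of_saturated h𝓘₁ fun J hJ I hIJ hI => ?_
    rcases hcases J hJ with ⟨I', hI', rfl, -⟩ | ⟨hJ₁, -⟩
    · exact absurd (mem_singleton.1 hIJ ▸ hI) hI'
    · exact hJ₁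
  · intro J hJ
    obtain ⟨hJ, hJ₁⟩ := mem_filter.1 hJ
    rcases hcases J hJ with ⟨I, hI, rfl, -⟩ | ⟨-, hJ2⟩
    · exact absurd (singleton_subset_iff.1 hJ₁) hI
    · exact hJ2
  · ext J
    rw [mem_sdiff, mem_filter, mem_image]
    refine ⟨fun ⟨hJ, hJ₁⟩ => ?_, ?_⟩
    · rcases hcases J hJ with ⟨I, hI, rfl, -⟩ | ⟨hsub, -⟩
      · exact ⟨I, mem_sdiff.2 ⟨h𝓙.2.1 _ hJ (mem_singleton_self I), hI⟩, rfl⟩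
      · exact absurd ⟨hJ, hsub⟩ hJ₁
    · rintro ⟨I, hI, rfl⟩
      exact ⟨(hblock I hI).2, fun hsub => (mem_sdiff.1 hI).2 (singleton_subset_iff.1 hsub.2)⟩

lemma IsDPPWith.two_mul_card_eq {S : Finset α} (h : IsDPPWith A 𝓘 𝓙 S) :
    2 * 𝓙.card = A.card := by
  obtain ⟨-, -, hSA, -, hrest, hpairs, hsingles⟩ := h
  have hrest' := hrest.two_mul_card
  have hpairs' := hpairs.two_mul_card
  have hsingles' := congrArg card hsingles
  rw [card_image_of_injective _ singleton_injective] at hpairs' hsingles'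
  rw [← card_sdiff_add_card_eq_card (filter_subset (· ⊆ S.image fun s => {s}) 𝓙),
    ← card_sdiff_add_card_eq_card hSA]
  omega

lemma mem_image_singleton_filter_iff (h𝓘 : IsPartitionOf A 𝓘) (I : Finset α) :
    I ∈ (A.filter fun a => {a} ∈ 𝓘).image (fun s => {s}) ↔ I ∈ 𝓘 ∧ I.card = 1 := by
  refine ⟨fun hI => ?_, fun ⟨hI, hI1⟩ => ?_⟩
  · obtain ⟨a, ha, rfl⟩ := mem_image.1 hI
    exact ⟨(mem_filter.1 ha).2, card_singleton a⟩
  · obtain ⟨a, rfl⟩ := card_eq_one.1 hI1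
    exact mem_image_of_mem _ (mem_filter.2 ⟨h𝓘.2.1 _ hI (mem_singleton_self a), hI⟩)

theorem two_mul_card_eq_iff_isDPP (h𝓘 : IsPartitionOf A 𝓘) (h𝓙 : IsPartitionOf 𝓘 𝓙)
    (hsing : ∀ a, ({a} : Finset α) ∈ 𝓘 → ({{a}} : Finset (Finset α)) ∉ 𝓙) :
    2 * 𝓙.card = A.card ↔ IsDPP A 𝓘 𝓙 :=
  ⟨fun heq => ⟨_, isDPPWith_of_sum_card_eq_two h𝓘 h𝓙 (mem_image_singleton_filter_iff h𝓘)
      (sum_card_eq_two_of_two_mul_card_eq h𝓘 h𝓙 hsing heq)⟩,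
    fun ⟨_, h⟩ => h.two_mul_card_eq⟩

end DoublePartition

theorem stmt_6_general (p : ℕ)
    (𝓘 : Finset (Finset (Fin p))) (𝓙 : Finset (Finset (Finset (Fin p))))
    (h𝓘 : IsPartitionOf Finset.univ 𝓘) (h𝓙 : IsPartitionOf 𝓘 𝓙)
    (hsing : ∀ i : Fin p, ({i} : Finset (Fin p)) ∈ 𝓘 →
      ({({i} : Finset (Fin p))} : Finset (Finset (Fin p))) ∉ 𝓙) :
    2 * 𝓙.card ≤ p ∧ (2 * 𝓙.card = p ↔ IsDPP Finset.univ 𝓘 𝓙) := by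
  have h := And.intro (two_mul_card_le h𝓘 h𝓙 hsing) (two_mul_card_eq_iff_isDPP h𝓘 h𝓙 hsing)
  rwa [card_fin] at h

/-- Let `p ≥ 2`, `𝓘` a partition of `{1,…,p}` and `𝓙` a partition of `𝓘` such that no
singleton block `{i}` of `𝓘` gives a singleton block `{{i}}` of `𝓙`. Then `|𝓙| ≤ p/2`,
with equality if and only if `(𝓘, 𝓙)` is a double partition into pairs of `{1,…,p}`. -/
theorem stmt_6 (p : ℕ) (hp : 2 ≤ p)
    (𝓘 : Finset (Finset (Fin p))) (𝓙 : Finset (Finset (Finset (Fin p))))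
    (h𝓘 : IsPartitionOf Finset.univ 𝓘) (h𝓙 : IsPartitionOf 𝓘 𝓙)
    (hsing : ∀ i : Fin p, ({i} : Finset (Fin p)) ∈ 𝓘 →
      ({({i} : Finset (Fin p))} : Finset (Finset (Fin p))) ∉ 𝓙) :
    2 * 𝓙.card ≤ p ∧ (2 * 𝓙.card = p ↔ IsDPP Finset.univ 𝓘 𝓙) :=
  stmt_6_general p 𝓘 𝓙 h𝓘 h𝓙 hsing
end

section
/- Let p ≥ 2. The map Φ sending a double partition into pairs (I, J) of {1,…,p} to the pair ((I \ I_S) ⊔ J_S, J_S) — where S is the union of singleton blocks of I, I_S = {{s} : s ∈ S}, and J_S = {{i,j} : {{i},{j}} is a block of J} — is a bijection from the set of double partitions into pairs of {1,…,p} onto the set of pairs (Π, Σ) where Π is a partition of {1,…,p} into pairs and Σ ⊆ Π. -/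
set_option linter.unusedSectionVars false
namespace DPPAux
variable {α : Type*} [DecidableEq α]

lemma mem_imageSing {S : Finset α} {a : α} :
    ({a} : Finset α) ∈ S.image (fun s => ({s} : Finset α)) ↔ a ∈ S := by
  simp only [Finset.mem_image]
  constructor
  · rintro ⟨s, hs, h⟩
    rwa [← Finset.singleton_injective h]
  · exact fun h => ⟨a, h, rfl⟩

lemma exists_of_mem_imageSing {S : Finset α} {I : Finset α}
    (h : I ∈ S.image (fun s => ({s} : Finset α))) : ∃ s ∈ S, I = {s} := by
  simpa [eq_comm] using Finset.mem_image.1 h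

lemma mem_sup_id_iff {J : Finset (Finset α)} (h : ∀ I ∈ J, ∃ t, I = ({t} : Finset α))
    {a : α} : a ∈ J.sup id ↔ ({a} : Finset α) ∈ J := by
  rw [Finset.mem_sup]
  constructor
  · rintro ⟨I, hI, haI⟩
    obtain ⟨t, rfl⟩ := h I hI
    simp only [id_eq, Finset.mem_singleton] at haI
    rwa [haI]
  · exact fun h => ⟨{a}, h, by simp⟩

lemma sup_id_imageSing (P : Finset α) :
    (P.image (fun s => ({s} : Finset α))).sup id = P := by
  ext a
  rw [mem_sup_id_iff (by intro I hI; obtain ⟨s, _, rfl⟩ := exists_of_mem_imageSing hI; exact ⟨s, rfl⟩),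
    mem_imageSing]

lemma imageSing_sup_id {J : Finset (Finset α)}
    (h : ∀ I ∈ J, ∃ t, I = ({t} : Finset α)) :
    (J.sup id).image (fun s => ({s} : Finset α)) = J := by
  ext I
  constructor
  · intro hI
    obtain ⟨s, hs, rfl⟩ := exists_of_mem_imageSing hI
    exact (mem_sup_id_iff h).1 hs
  · intro hI
    obtain ⟨t, rfl⟩ := h I hI
    exact mem_imageSing.2 ((mem_sup_id_iff h).2 hI)

lemma sup_id_subset {J : Finset (Finset α)} {S : Finset α}
    (h : J ⊆ S.image (fun s => ({s} : Finset α))) : J.sup id ⊆ S := by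
  intro a ha
  have := (mem_sup_id_iff (fun I hI => by
    obtain ⟨s, _, rfl⟩ := exists_of_mem_imageSing (h hI); exact ⟨s, rfl⟩)).1 ha
  exact mem_imageSing.1 (h this)

lemma card_sup_id {J : Finset (Finset α)} {S : Finset α}
    (h : J ⊆ S.image (fun s => ({s} : Finset α))) : (J.sup id).card = J.card := by
  have hs : ∀ I ∈ J, ∃ t, I = ({t} : Finset α) := fun I hI => by
    obtain ⟨s, _, rfl⟩ := exists_of_mem_imageSing (h hI); exact ⟨s, rfl⟩
  conv_rhs => rw [← imageSing_sup_id hs]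
  rw [Finset.card_image_of_injective _ Finset.singleton_injective]

lemma part_eq_of_mem {B : Finset α} {𝓘 : Finset (Finset α)}
    (h : IsPartitionOf B 𝓘) {I I' : Finset α} {a : α} (hI : I ∈ 𝓘) (hI' : I' ∈ 𝓘)
    (ha : a ∈ I) (ha' : a ∈ I') : I = I' := by
  obtain ⟨J, _, hJu⟩ := h.2.2 a (h.2.1 I hI ha)
  rw [hJu I ⟨hI, ha⟩, hJu I' ⟨hI', ha'⟩]

lemma isPartitionOf_union {B₁ B₂ : Finset α} {P₁ P₂ : Finset (Finset α)}
    (h₁ : IsPartitionOf B₁ P₁) (h₂ : IsPartitionOf B₂ P₂) (hd : Disjoint B₁ B₂) :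
    IsPartitionOf (B₁ ∪ B₂) (P₁ ∪ P₂) := by
  refine ⟨?_, ?_, ?_⟩
  · intro I hI
    rcases Finset.mem_union.1 hI with h | h
    exacts [h₁.1 I h, h₂.1 I h]
  · intro I hI
    rcases Finset.mem_union.1 hI with h | h
    exacts [(h₁.2.1 I h).trans Finset.subset_union_left,
      (h₂.2.1 I h).trans Finset.subset_union_right]
  · intro a ha
    rcases Finset.mem_union.1 ha with h | h
    · obtain ⟨I, hI, hIu⟩ := h₁.2.2 a h
      refine ⟨I, ⟨Finset.mem_union_left _ hI.1, hI.2⟩, ?_⟩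
      rintro I' ⟨hI', haI'⟩
      rcases Finset.mem_union.1 hI' with h' | h'
      · exact hIu I' ⟨h', haI'⟩
      · exact absurd (h₂.2.1 I' h' haI') (Finset.disjoint_left.1 hd h)
    · obtain ⟨I, hI, hIu⟩ := h₂.2.2 a h
      refine ⟨I, ⟨Finset.mem_union_right _ hI.1, hI.2⟩, ?_⟩
      rintro I' ⟨hI', haI'⟩
      rcases Finset.mem_union.1 hI' with h' | h'
      · exact absurd (h₁.2.1 I' h' haI') (Finset.disjoint_right.1 hd h)
      · exact hIu I' ⟨h', haI'⟩


variable {A S : Finset α} {𝓘 : Finset (Finset α)} {𝓙 : Finset (Finset (Finset α))}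

lemma dpp_imageSing_subset (h : IsDPPWith A 𝓘 𝓙 S) :
    S.image (fun s => ({s} : Finset α)) ⊆ 𝓘 := by
  rw [← h.2.2.2.1]; exact Finset.filter_subset _ _

lemma dpp_singleton_mem_iff (h : IsDPPWith A 𝓘 𝓙 S) {a : α} :
    ({a} : Finset α) ∈ 𝓘 ↔ a ∈ S := by
  constructor
  · intro ha
    by_contra hna
    have h1 : ({a} : Finset α) ∉ S.image (fun s => ({s} : Finset α)) :=
      fun hx => hna (mem_imageSing.1 hx)
    have := h.2.2.2.2.1.2 {a} (Finset.mem_sdiff.2 ⟨ha, h1⟩)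
    simp at this
  · intro ha
    exact dpp_imageSing_subset h (mem_imageSing.2 ha)

lemma isPartitionOf_imageSing (S : Finset α) :
    IsPartitionOf S (S.image (fun s => ({s} : Finset α))) := by
  refine ⟨?_, ?_, ?_⟩
  · intro I hI; obtain ⟨s, _, rfl⟩ := exists_of_mem_imageSing hI; simp
  · intro I hI; obtain ⟨s, hs, rfl⟩ := exists_of_mem_imageSing hI
    simpa using hs
  · intro a ha
    refine ⟨{a}, ⟨mem_imageSing.2 ha, by simp⟩, ?_⟩
    rintro I ⟨hI, haI⟩
    obtain ⟨s, _, rfl⟩ := exists_of_mem_imageSing hI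
    simp only [Finset.mem_singleton] at haI
    rw [haI]

/-- `𝓙_S` is a pair partition of `S`. -/
lemma dpp_JS_pairPartition (h : IsDPPWith A 𝓘 𝓙 S) :
    IsPairPartitionOf S
      (((𝓙.filter (fun J => J ⊆ S.image (fun s => ({s} : Finset α))))).image
        (fun J => J.sup id)) := by
  have h6 := h.2.2.2.2.2.1
  have hsub : ∀ J ∈ 𝓙.filter (fun J => J ⊆ S.image (fun s => ({s} : Finset α))),
      J ⊆ S.image (fun s => ({s} : Finset α)) := fun J hJ => (Finset.mem_filter.1 hJ).2
  constructor
  constructor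
  · intro P hP
    obtain ⟨J, hJ, rfl⟩ := Finset.mem_image.1 hP
    rw [← Finset.card_pos, card_sup_id (hsub J hJ), h6.2 J hJ]; norm_num
  constructor
  · intro P hP
    obtain ⟨J, hJ, rfl⟩ := Finset.mem_image.1 hP
    exact sup_id_subset (hsub J hJ)
  · intro a ha
    obtain ⟨J, ⟨hJ, haJ⟩, hJu⟩ := h6.1.2.2 {a} (mem_imageSing.2 ha)
    have hJs : ∀ I ∈ J, ∃ t, I = ({t} : Finset α) := fun I hI => by
      obtain ⟨s, _, rfl⟩ := exists_of_mem_imageSing (hsub J hJ hI); exact ⟨s, rfl⟩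
    refine ⟨J.sup id, ⟨Finset.mem_image_of_mem _ hJ, (mem_sup_id_iff hJs).2 haJ⟩, ?_⟩
    rintro P ⟨hP, haP⟩
    obtain ⟨J', hJ', rfl⟩ := Finset.mem_image.1 hP
    have hJ's : ∀ I ∈ J', ∃ t, I = ({t} : Finset α) := fun I hI => by
      obtain ⟨s, _, rfl⟩ := exists_of_mem_imageSing (hsub J' hJ' hI); exact ⟨s, rfl⟩
    rw [hJu J' ⟨hJ', (mem_sup_id_iff hJ's).1 haP⟩]
  · intro P hP
    obtain ⟨J, hJ, rfl⟩ := Finset.mem_image.1 hP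
    rw [card_sup_id (hsub J hJ)]
    exact h6.2 J hJ

/-- The first component of `Φ` is a pair partition of `A`. -/
lemma dpp_Phi1 (h : IsDPPWith A 𝓘 𝓙 S) :
    IsPairPartitionOf A
      ((𝓘 \ S.image (fun s => ({s} : Finset α))) ∪
        ((𝓙.filter (fun J => J ⊆ S.image (fun s => ({s} : Finset α)))).image
          (fun J => J.sup id))) := by
  have h5 := h.2.2.2.2.1
  have hJS := dpp_JS_pairPartition h
  refine ⟨?_, ?_⟩
  · have := isPartitionOf_union h5.1 hJS.1 (Finset.sdiff_disjoint)
    rwa [Finset.sdiff_union_of_subset h.2.2.1] at this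
  · intro I hI
    rcases Finset.mem_union.1 hI with hx | hx
    exacts [h5.2 I hx, hJS.2 I hx]

end DPPAux

namespace DPPAux
variable {α : Type*} [DecidableEq α] {A : Finset α}

lemma union_sdiff_cancel {β : Type*} [DecidableEq β] {X Y : Finset β}
    (h : ∀ I ∈ X, I ∉ Y) : (X ∪ Y) \ Y = X := by
  ext I
  simp only [Finset.mem_sdiff, Finset.mem_union]
  constructor
  · rintro ⟨hI | hI, hnY⟩
    · exact hI
    · exact absurd hI hnY
  · exact fun hI => ⟨Or.inl hI, h I hI⟩

lemma backward {Pt Sg : Finset (Finset α)} (hPt : IsPairPartitionOf A Pt) (hSg : Sg ⊆ Pt) :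
    IsDPPWith A ((Pt \ Sg) ∪ (Sg.sup id).image (fun s => ({s} : Finset α)))
      (Sg.image (fun P => P.image (fun s => ({s} : Finset α))) ∪
        (Pt \ Sg).image (fun I => ({I} : Finset (Finset α)))) (Sg.sup id) := by
  set S := Sg.sup id with hS
  have memS : ∀ {a : α}, a ∈ S ↔ ∃ P ∈ Sg, a ∈ P := fun {a} => by
    simp [hS, Finset.mem_sup]
  have hPsubS : ∀ P ∈ Sg, P ⊆ S := fun P hP => Finset.le_sup (f := id) hP
  have hdisj : ∀ I ∈ Pt \ Sg, ∀ a ∈ I, a ∉ S := by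
    intro I hI a haI haS
    obtain ⟨P, hP, haP⟩ := memS.1 haS
    have := part_eq_of_mem hPt.1 (Finset.mem_sdiff.1 hI).1 (hSg hP) haI haP
    exact (Finset.mem_sdiff.1 hI).2 (this ▸ hP)
  have hSA : S ⊆ A := by
    intro a ha; obtain ⟨P, hP, haP⟩ := memS.1 ha; exact hPt.1.2.1 P (hSg hP) haP
  have hcard2 : ∀ I ∈ Pt \ Sg, I.card = 2 := fun I hI => hPt.2 I (Finset.mem_sdiff.1 hI).1
  have hnotin : ∀ I ∈ Pt \ Sg, I ∉ S.image (fun s => ({s} : Finset α)) := by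
    intro I hI hx
    obtain ⟨s, _, rfl⟩ := exists_of_mem_imageSing hx
    simpa using hcard2 _ hI
  -- Pt \ Sg is a pair partition of A \ S
  have hPiSdiff : IsPairPartitionOf (A \ S) (Pt \ Sg) := by
    refine ⟨⟨fun I hI => hPt.1.1 I (Finset.mem_sdiff.1 hI).1, ?_, ?_⟩, hcard2⟩
    · intro I hI a haI
      exact Finset.mem_sdiff.2 ⟨hPt.1.2.1 I (Finset.mem_sdiff.1 hI).1 haI, hdisj I hI a haI⟩
    · intro a ha
      obtain ⟨haA, haS⟩ := Finset.mem_sdiff.1 ha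
      obtain ⟨I, ⟨hI, haI⟩, hIu⟩ := hPt.1.2.2 a haA
      have hInSg : I ∉ Sg := fun hx => haS (hPsubS I hx haI)
      refine ⟨I, ⟨Finset.mem_sdiff.2 ⟨hI, hInSg⟩, haI⟩, ?_⟩
      rintro I' ⟨hI', haI'⟩
      exact hIu I' ⟨(Finset.mem_sdiff.1 hI').1, haI'⟩
  -- 𝓘 is a partition of A
  have h𝓘 : IsPartitionOf A ((Pt \ Sg) ∪ S.image (fun s => ({s} : Finset α))) := by
    have := isPartitionOf_union hPiSdiff.1 (isPartitionOf_imageSing S) Finset.sdiff_disjoint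
    rwa [Finset.sdiff_union_of_subset hSA] at this
  -- Sg.image (image sing) partitions the singletons of S
  have hSgpart : IsPartitionOf (S.image (fun s => ({s} : Finset α)))
      (Sg.image (fun P => P.image (fun s => ({s} : Finset α)))) := by
    refine ⟨?_, ?_, ?_⟩
    · intro J hJ
      obtain ⟨P, hP, rfl⟩ := Finset.mem_image.1 hJ
      exact (hPt.1.1 P (hSg hP)).image _
    · intro J hJ
      obtain ⟨P, hP, rfl⟩ := Finset.mem_image.1 hJ
      exact Finset.image_subset_image (hPsubS P hP)
    · intro I hI
      obtain ⟨s, hs, rfl⟩ := exists_of_mem_imageSing hI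
      obtain ⟨P, hP, hsP⟩ := memS.1 hs
      refine ⟨P.image (fun s => ({s} : Finset α)),
        ⟨Finset.mem_image_of_mem _ hP, mem_imageSing.2 hsP⟩, ?_⟩
      rintro J ⟨hJ, hsJ⟩
      obtain ⟨Q, hQ, rfl⟩ := Finset.mem_image.1 hJ
      have hsQ : s ∈ Q := mem_imageSing.1 hsJ
      rw [part_eq_of_mem hPt.1 (hSg hQ) (hSg hP) hsQ hsP]
  -- the singleton blocks of Pt \ Sg
  have hBpart : IsPartitionOf (Pt \ Sg) ((Pt \ Sg).image (fun I => ({I} : Finset (Finset α)))) :=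
    isPartitionOf_imageSing _
  have hdisjJ : Disjoint (S.image (fun s => ({s} : Finset α))) (Pt \ Sg) := by
    rw [Finset.disjoint_left]
    intro I hI hI'
    exact hnotin I hI' hI
  have h𝓙 : IsPartitionOf ((Pt \ Sg) ∪ S.image (fun s => ({s} : Finset α)))
      (Sg.image (fun P => P.image (fun s => ({s} : Finset α))) ∪
        (Pt \ Sg).image (fun I => ({I} : Finset (Finset α)))) := by
    have := isPartitionOf_union hSgpart hBpart hdisjJ
    rwa [Finset.union_comm (S.image _) (Pt \ Sg)] at this
  -- the filter on 𝓘
  have hfilt𝓘 : ((Pt \ Sg) ∪ S.image (fun s => ({s} : Finset α))).filter (fun I => I ⊆ S) =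
      S.image (fun s => ({s} : Finset α)) := by
    ext I
    simp only [Finset.mem_filter, Finset.mem_union]
    constructor
    · rintro ⟨hI | hI, hIS⟩
      · obtain ⟨a, haI⟩ := hPt.1.1 I (Finset.mem_sdiff.1 hI).1
        exact absurd (hIS haI) (hdisj I hI a haI)
      · exact hI
    · intro hI
      obtain ⟨s, hs, rfl⟩ := exists_of_mem_imageSing hI
      exact ⟨Or.inr hI, by simpa using hs⟩
  -- 𝓘 minus the singletons
  have hsdiff𝓘 : ((Pt \ Sg) ∪ S.image (fun s => ({s} : Finset α))) \
      S.image (fun s => ({s} : Finset α)) = Pt \ Sg := union_sdiff_cancel hnotin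
  -- the filter on 𝓙
  have hfilt𝓙 : (Sg.image (fun P => P.image (fun s => ({s} : Finset α))) ∪
      (Pt \ Sg).image (fun I => ({I} : Finset (Finset α)))).filter
        (fun J => J ⊆ S.image (fun s => ({s} : Finset α))) =
      Sg.image (fun P => P.image (fun s => ({s} : Finset α))) := by
    ext J
    simp only [Finset.mem_filter, Finset.mem_union]
    constructor
    · rintro ⟨hJ | hJ, hJS⟩
      · exact hJ
      · obtain ⟨I, hI, rfl⟩ := Finset.mem_image.1 hJ
        exact absurd (hJS (Finset.mem_singleton_self I)) (hnotin I hI)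
    · intro hJ
      obtain ⟨P, hP, rfl⟩ := Finset.mem_image.1 hJ
      exact ⟨Or.inl hJ, Finset.image_subset_image (hPsubS P hP)⟩
  refine ⟨h𝓘, ?_, hSA, hfilt𝓘, ?_, ?_, ?_⟩
  · exact h𝓙
  · rw [hsdiff𝓘]; exact hPiSdiff
  · rw [hfilt𝓙]
    refine ⟨hSgpart, ?_⟩
    intro J hJ
    obtain ⟨P, hP, rfl⟩ := Finset.mem_image.1 hJ
    rw [Finset.card_image_of_injective _ Finset.singleton_injective]
    exact hPt.2 P (hSg hP)
  · rw [hfilt𝓙, hsdiff𝓘, Finset.union_comm]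
    apply union_sdiff_cancel
    intro J hJ hJ'
    obtain ⟨I, hI, rfl⟩ := Finset.mem_image.1 hJ
    obtain ⟨P, hP, hPe⟩ := Finset.mem_image.1 hJ'
    have : P.card = 1 := by
      have := congrArg Finset.card hPe
      rwa [Finset.card_image_of_injective _ Finset.singleton_injective,
        Finset.card_singleton] at this
    rw [hPt.2 P (hSg hP)] at this
    omega

end DPPAux

namespace DPPAux
variable {α : Type*} [DecidableEq α] {A S : Finset α} {𝓘 : Finset (Finset α)}
  {𝓙 : Finset (Finset (Finset α))}

lemma dpp_S_eq [Fintype α] {𝓘 : Finset (Finset α)} {𝓙 : Finset (Finset (Finset α))}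
    {S : Finset α} (h : IsDPPWith (Finset.univ : Finset α) 𝓘 𝓙 S) :
    Finset.univ.filter (fun a => ({a} : Finset α) ∈ 𝓘) = S := by
  ext a
  simp [Finset.mem_filter, dpp_singleton_mem_iff h]

lemma JS_sup_id (h : IsDPPWith A 𝓘 𝓙 S) :
    (((𝓙.filter (fun J => J ⊆ S.image (fun s => ({s} : Finset α)))).image
      (fun J => J.sup id)).sup id) = S := by
  ext a
  rw [Finset.mem_sup]
  constructor
  · rintro ⟨P, hP, haP⟩
    obtain ⟨J, hJ, rfl⟩ := Finset.mem_image.1 hP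
    exact sup_id_subset (Finset.mem_filter.1 hJ).2 haP
  · intro ha
    obtain ⟨J, ⟨hJ, haJ⟩, -⟩ := h.2.2.2.2.2.1.1.2.2 {a} (mem_imageSing.2 ha)
    exact ⟨J.sup id, Finset.mem_image_of_mem _ hJ,
      Finset.mem_sup.2 ⟨{a}, haJ, Finset.mem_singleton_self a⟩⟩

lemma JS_notin (h : IsDPPWith A 𝓘 𝓙 S) :
    ∀ I ∈ 𝓘 \ S.image (fun s => ({s} : Finset α)),
      I ∉ (𝓙.filter (fun J => J ⊆ S.image (fun s => ({s} : Finset α)))).image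
        (fun J => J.sup id) := by
  intro I hI hI'
  obtain ⟨J, hJ, hJe⟩ := Finset.mem_image.1 hI'
  have h5 := h.2.2.2.2.1
  obtain ⟨a, ha⟩ := h5.1.1 I hI
  have haS : a ∈ S := sup_id_subset (Finset.mem_filter.1 hJ).2 (hJe ▸ ha)
  exact (Finset.mem_sdiff.1 (h5.1.2.1 I hI ha)).2 haS

lemma JS_sdiff (h : IsDPPWith A 𝓘 𝓙 S) :
    ((𝓘 \ S.image (fun s => ({s} : Finset α))) ∪
      (𝓙.filter (fun J => J ⊆ S.image (fun s => ({s} : Finset α)))).image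
        (fun J => J.sup id)) \
      (𝓙.filter (fun J => J ⊆ S.image (fun s => ({s} : Finset α)))).image
        (fun J => J.sup id) = 𝓘 \ S.image (fun s => ({s} : Finset α)) :=
  union_sdiff_cancel (JS_notin h)

lemma JS_image (h : IsDPPWith A 𝓘 𝓙 S) :
    ((𝓙.filter (fun J => J ⊆ S.image (fun s => ({s} : Finset α)))).image
      (fun J => J.sup id)).image (fun P => P.image (fun s => ({s} : Finset α))) =
    𝓙.filter (fun J => J ⊆ S.image (fun s => ({s} : Finset α))) := by
  rw [Finset.image_image]
  have : (𝓙.filter (fun J => J ⊆ S.image (fun s => ({s} : Finset α)))).image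
      ((fun P => P.image (fun s => ({s} : Finset α))) ∘ (fun J => J.sup id)) =
      (𝓙.filter (fun J => J ⊆ S.image (fun s => ({s} : Finset α)))).image id := by
    apply Finset.image_congr
    intro J hJ
    have hJs : ∀ I ∈ J, ∃ t, I = ({t} : Finset α) := fun I hI => by
      obtain ⟨s, _, rfl⟩ := exists_of_mem_imageSing ((Finset.mem_filter.1 hJ).2 hI)
      exact ⟨s, rfl⟩
    exact imageSing_sup_id hJs
  rw [this, Finset.image_id]

/-- extracted facts about the backward construction -/
lemma bwd_notin {Pt Sg : Finset (Finset α)} (hPt : IsPairPartitionOf A Pt)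
    (hSg : Sg ⊆ Pt) :
    ∀ I ∈ Pt \ Sg, I ∉ (Sg.sup id).image (fun s => ({s} : Finset α)) := by
  intro I hI hx
  obtain ⟨s, _, rfl⟩ := exists_of_mem_imageSing hx
  have := hPt.2 _ (Finset.mem_sdiff.1 hI).1
  simp at this

lemma bwd_sdiff {Pt Sg : Finset (Finset α)} (hPt : IsPairPartitionOf A Pt)
    (hSg : Sg ⊆ Pt) :
    ((Pt \ Sg) ∪ (Sg.sup id).image (fun s => ({s} : Finset α))) \
      (Sg.sup id).image (fun s => ({s} : Finset α)) = Pt \ Sg :=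
  union_sdiff_cancel (bwd_notin hPt hSg)

lemma bwd_filt (hPt : IsPairPartitionOf A Pt) (hSg : Sg ⊆ Pt) :
    (Sg.image (fun P => P.image (fun s => ({s} : Finset α))) ∪
      (Pt \ Sg).image (fun I => ({I} : Finset (Finset α)))).filter
        (fun J => J ⊆ (Sg.sup id).image (fun s => ({s} : Finset α))) =
      Sg.image (fun P => P.image (fun s => ({s} : Finset α))) := by
  have hPsubS : ∀ P ∈ Sg, P ⊆ Sg.sup id := fun P hP => Finset.le_sup (f := id) hP
  ext J
  simp only [Finset.mem_filter, Finset.mem_union]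
  constructor
  · rintro ⟨hJ | hJ, hJS⟩
    · exact hJ
    · obtain ⟨I, hI, rfl⟩ := Finset.mem_image.1 hJ
      exact absurd (hJS (Finset.mem_singleton_self I)) (bwd_notin hPt hSg I hI)
  · intro hJ
    obtain ⟨P, hP, rfl⟩ := Finset.mem_image.1 hJ
    exact ⟨Or.inl hJ, Finset.image_subset_image (hPsubS P hP)⟩

lemma bwd_JS (hPt : IsPairPartitionOf A Pt) (hSg : Sg ⊆ Pt) :
    ((Sg.image (fun P => P.image (fun s => ({s} : Finset α))) ∪
      (Pt \ Sg).image (fun I => ({I} : Finset (Finset α)))).filter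
        (fun J => J ⊆ (Sg.sup id).image (fun s => ({s} : Finset α)))).image
      (fun J => J.sup id) = Sg := by
  rw [bwd_filt hPt hSg, Finset.image_image]
  have : ((fun J : Finset (Finset α) => J.sup id) ∘
      (fun P : Finset α => P.image (fun s => ({s} : Finset α)))) = id := by
    funext P
    exact sup_id_imageSing P
  rw [this, Finset.image_id]

end DPPAux

open DPPAux

/-- The map `Φ : (𝓘, 𝓙) ↦ ((𝓘 \ 𝓘_S) ⊔ 𝓙_S, 𝓙_S)`, where `S` is the union of the
singleton blocks of `𝓘`, `𝓘_S = {{s} : s ∈ S}` and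
`𝓙_S = {{i,j} : {{i},{j}} ∈ 𝓙}`, is a bijection from the set of double partitions into
pairs of `{1,…,p}` onto the set of pairs `(Π, Σ)` with `Π` a partition of `{1,…,p}` into
pairs and `Σ ⊆ Π`. -/
theorem stmt_9 (p : ℕ) (hp : 2 ≤ p) :
    Set.BijOn
      (fun q : Finset (Finset (Fin p)) × Finset (Finset (Finset (Fin p))) =>
        let S : Finset (Fin p) :=
          Finset.univ.filter (fun a => ({a} : Finset (Fin p)) ∈ q.1)
        let JS : Finset (Finset (Fin p)) :=
          (q.2.filter (fun J => J ⊆ S.image (fun s => ({s} : Finset (Fin p))))).image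
            (fun J => J.sup id)
        ((q.1 \ S.image (fun s => ({s} : Finset (Fin p)))) ∪ JS, JS))
      {q | IsDPP Finset.univ q.1 q.2}
      {q : Finset (Finset (Fin p)) × Finset (Finset (Fin p)) |
        IsPairPartitionOf Finset.univ q.1 ∧ q.2 ⊆ q.1} := by
  classical
  refine Set.InvOn.bijOn
    (f' := fun r : Finset (Finset (Fin p)) × Finset (Finset (Fin p)) =>
      (r.1 \ r.2 ∪ (r.2.sup id).image (fun s => ({s} : Finset (Fin p))),
       r.2.image (fun P => P.image (fun s => ({s} : Finset (Fin p)))) ∪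
         (r.1 \ r.2).image (fun I => ({I} : Finset (Finset (Fin p))))))
    ⟨?_, ?_⟩ ?_ ?_
  · -- LeftInvOn
    rintro ⟨𝓘, 𝓙⟩ ⟨S, h⟩
    dsimp only
    rw [dpp_S_eq h]
    have h1 : ((𝓘 \ S.image (fun s => ({s} : Finset (Fin p)))) ∪
        (𝓙.filter (fun J => J ⊆ S.image (fun s => ({s} : Finset (Fin p))))).image
          (fun J => J.sup id)) \
        (𝓙.filter (fun J => J ⊆ S.image (fun s => ({s} : Finset (Fin p))))).image
          (fun J => J.sup id) = 𝓘 \ S.image (fun s => ({s} : Finset (Fin p))) :=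
      JS_sdiff h
    rw [h1, JS_sup_id h, JS_image h,
      Finset.sdiff_union_of_subset (dpp_imageSing_subset h), ← h.2.2.2.2.2.2,
      Finset.union_sdiff_of_subset (Finset.filter_subset _ _)]
  · -- RightInvOn
    rintro ⟨Pt, Sg⟩ ⟨hPt, hSg⟩
    have hb := backward hPt hSg
    dsimp only
    rw [dpp_S_eq hb, bwd_filt hPt hSg]
    have himg : (Sg.image (fun P => P.image (fun s => ({s} : Finset (Fin p))))).image
        (fun J => J.sup id) = Sg := by
      rw [Finset.image_image]
      have : ((fun J : Finset (Finset (Fin p)) => J.sup id) ∘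
          (fun P : Finset (Fin p) => P.image (fun s => ({s} : Finset (Fin p))))) = id := by
        funext P
        exact sup_id_imageSing P
      rw [this, Finset.image_id]
    rw [himg, bwd_sdiff hPt hSg, Finset.sdiff_union_of_subset hSg]
  · -- MapsTo Φ
    rintro ⟨𝓘, 𝓙⟩ ⟨S, h⟩
    simp only [Set.mem_setOf_eq]
    rw [dpp_S_eq h]
    exact ⟨dpp_Phi1 h, Finset.subset_union_right⟩
  · -- MapsTo Ψ
    rintro ⟨Pt, Sg⟩ ⟨hPt, hSg⟩
    exact ⟨Sg.sup id, backward hPt hSg⟩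
end
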